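/- Let σ = u x z v and σ' = u z x v be permutations of X (as standard words) with x < z, where v contains no letter y with x < y < z. Then the triangulations φ(σ) and φ(σ') differ by exactly one diagonal flip. -/

import Mathlib

open scoped Classical

/-- `d` is a diagonal of the convex `(n+2)`-gon with vertices `0,…,n+1`
(in clockwise increasing order): it joins two nonadjacent vertices. -/
def IsDiagonal (n : ℕ) (d : ℕ × ℕ) : Prop :=
  d.1 < d.2 ∧ d.2 ≤ n + 1 ∧ d.2 ≠ d.1 + 1 ∧ ¬(d.1 = 0 ∧ d.2 = n + 1)

/-- Two diagonals of a convex polygon cross. -/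
def Crosses (d e : ℕ × ℕ) : Prop :=
  (d.1 < e.1 ∧ e.1 < d.2 ∧ d.2 < e.2) ∨ (e.1 < d.1 ∧ d.1 < e.2 ∧ e.2 < d.2)

/-- A triangulation of the convex `(n+2)`-gon: `n-1` pairwise noncrossing diagonals. -/
def IsTriangulation (n : ℕ) (D : Finset (ℕ × ℕ)) : Prop :=
  (∀ d ∈ D, IsDiagonal n d) ∧ (∀ d ∈ D, ∀ e ∈ D, ¬ Crosses d e) ∧ D.card = n - 1

/-- `{a,b}` (with `a<b`) is an edge of the triangulation `D`: a polygon side or a diagonal. -/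
def IsEdge (n : ℕ) (D : Finset (ℕ × ℕ)) (a b : ℕ) : Prop :=
  a < b ∧ b ≤ n + 1 ∧ (b = a + 1 ∨ (a = 0 ∧ b = n + 1) ∨ (a, b) ∈ D)

/-- `{a,b,c}` (with `a<b<c`) is a (triangular) face of the triangulation `D`. -/
def IsFace (n : ℕ) (D : Finset (ℕ × ℕ)) (a b c : ℕ) : Prop :=
  a < b ∧ b < c ∧ IsEdge n D a b ∧ IsEdge n D b c ∧ IsEdge n D a c

/-- An ear of a triangulation: a vertex incident to no diagonal. -/
def IsEar (n : ℕ) (D : Finset (ℕ × ℕ)) (v : ℕ) : Prop :=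
  v ≤ n + 1 ∧ ∀ d ∈ D, d.1 ≠ v ∧ d.2 ≠ v

/-- Degree of a vertex: number of edges (polygon sides and diagonals) incident to it. -/
noncomputable def degreeOf (n : ℕ) (D : Finset (ℕ × ℕ)) (v : ℕ) : ℕ :=
  ((Finset.range (n + 2)).filter (fun w => w ≠ v ∧ IsEdge n D (min v w) (max v w))).card

/-- The set of faces of a triangulation, as increasing triples. -/
noncomputable def facesSet (n : ℕ) (D : Finset (ℕ × ℕ)) : Finset (ℕ × ℕ × ℕ) :=
  (Finset.range (n + 2) ×ˢ Finset.range (n + 2) ×ˢ Finset.range (n + 2)).filter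
    (fun t => IsFace n D t.1 t.2.1 t.2.2)

/-- Predecessor of `v` in the vertex set `Y`. -/
def predIn (Y : Finset ℕ) (v : ℕ) : ℕ := (Y.filter (· < v)).max.unbotD 0
/-- Successor of `v` in the vertex set `Y`. -/
def succIn (Y : Finset ℕ) (v : ℕ) : ℕ := (Y.filter (v < ·)).min.untopD 0

/-- The iterative neighbor-joining construction: for each successive letter,
join its two current neighbors by a diagonal and delete the letter's vertex. -/
def phiAux : List ℕ → Finset ℕ → Finset (ℕ × ℕ)
  | [], _ => ∅
  | [_], _ => ∅
  | v :: rest, Y => insert (predIn Y v, succIn Y v) (phiAux rest (Y.erase v))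

/-- The map `φ` from permutations (standard words, letters `1,…,n`) to
triangulations of the `(n+2)`-gon with vertices `0,…,n+1`. -/
def phiT (n : ℕ) (l : List ℕ) : Finset (ℕ × ℕ) := phiAux l (Finset.range (n + 2))

/-- `t` is the third vertex of a face of `D` containing the polygon side `{i, i+1}`. -/
def FaceOnEdge (n : ℕ) (D : Finset (ℕ × ℕ)) (i t : ℕ) : Prop :=
  (t < i ∧ IsFace n D t i (i + 1)) ∨ (i + 1 < t ∧ IsFace n D i (i + 1) t)

/-- `D` and `D'` differ by one diagonal flip, in the quadrilateral `a<b<c<d`. -/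
def FlipAdj (n : ℕ) (D D' : Finset (ℕ × ℕ)) : Prop :=
  ∃ a b c d : ℕ, a < b ∧ b < c ∧ c < d ∧
    ((IsFace n D a b d ∧ IsFace n D b c d ∧ D' = insert (a, c) (D.erase (b, d))) ∨
     (IsFace n D a b c ∧ IsFace n D a c d ∧ D' = insert (b, d) (D.erase (a, c))))

/-- Sylvester adjacency: `u x z u' y u'' ~ u z x u' y u''` with `x ≤ y < z`. -/
def SylvAdj (w1 w2 : List ℕ) : Prop :=
  ∃ (u u' u'' : List ℕ) (x y z : ℕ), x ≤ y ∧ y < z ∧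
    w1 = u ++ x :: z :: (u' ++ y :: u'') ∧ w2 = u ++ z :: x :: (u' ++ y :: u'')

/-- Sylvester congruence: the equivalence relation generated by sylvester adjacency. -/
def SylvCong : List ℕ → List ℕ → Prop := Relation.EqvGen SylvAdj

/-- Standardization of a word: replace the occurrences of the smallest letter,
left to right, by `1, 2, …`, then continue with the next letter, etc. -/
def stdW (w : List ℕ) : List ℕ :=
  (List.range w.length).map (fun i =>
    (((List.range w.length).filter (fun j =>
      w.getD j 0 < w.getD i 0 ∨ (w.getD j 0 = w.getD i 0 ∧ j < i))).length) + 1)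

/-- Partial sums of an evaluation `μ`. -/
def Msum (μ : ℕ → ℕ) (s : ℕ) : ℕ := ∑ t ∈ Finset.range s, μ t

/-- The color (block index) of the vertex `i` for the increasing coloring `ε_μ`. -/
noncomputable def colOf (μ : ℕ → ℕ) (p i : ℕ) : ℕ :=
  ((Finset.range p).filter (fun s => Msum μ (s + 1) < i)).card

/-- `D`, colored by the increasing coloring `ε_μ`, is a simple colored triangulation. -/
def SimpleFor (n p : ℕ) (μ : ℕ → ℕ) (D : Finset (ℕ × ℕ)) : Prop :=
  IsTriangulation n D ∧
  (∀ d ∈ D, 1 ≤ d.1 → d.2 ≤ n → colOf μ p d.1 ≠ colOf μ p d.2) ∧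
  (∀ i t, 1 ≤ i → i + 1 ≤ n → colOf μ p i = colOf μ p (i + 1) →
    FaceOnEdge n D i t → t < i)

/-- Switched flip: a diagonal flip (preserving vertex colors) whose two adjacent
faces (with middle vertices `b` and `c`) have different colors. -/
def SwFlipAdj (n p : ℕ) (μ : ℕ → ℕ) (D D' : Finset (ℕ × ℕ)) : Prop :=
  ∃ a b c d : ℕ, a < b ∧ b < c ∧ c < d ∧ colOf μ p b ≠ colOf μ p c ∧
    ((IsFace n D a b d ∧ IsFace n D b c d ∧ D' = insert (a, c) (D.erase (b, d))) ∨
     (IsFace n D a b c ∧ IsFace n D a c d ∧ D' = insert (b, d) (D.erase (a, c))))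

/-!
Deleting the letters of `u` leaves a vertex set `Y` in which `x` and `z` are consecutive, because
no letter of `v` lies between them; let `a` and `d` be the neighbours of `x` and `z` in `Y`.
Reading `x` and then `z` draws the diagonals `az` and `ad`, reading `z` and then `x` draws `xd`
and `ad`, and afterwards both words see the same vertex set `Y \ {x, z}`. The diagonal `az` is
drawn nowhere else: a diagonal drawn while deleting `u` spans no vertex of `Y`, such as `x`, and
a later one never ends at the deleted vertex `z`. Consecutive surviving vertices are always joined
in `φ(σ)`, so `axz` and `azd` are faces of `φ(σ)`, and flipping `az` in `axzd` gives `φ(σ')`.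
-/

def NoneBetween (Y : Finset ℕ) (p s : ℕ) : Prop :=
  ∀ q ∈ Y, ¬(p < q ∧ q < s)

section Neighbours

variable {Y : Finset ℕ} {p q s v : ℕ}

lemma NoneBetween.mono {Y' : Finset ℕ} (h : NoneBetween Y p s) (hY : Y' ⊆ Y) :
    NoneBetween Y' p s :=
  fun q hq => h q (hY hq)

lemma NoneBetween.erase_of_noneBetween {w : ℕ} (hpw : NoneBetween Y p w)
    (hws : NoneBetween Y w s) : NoneBetween (Y.erase w) p s := by
  intro q hq ⟨hpq, hqs⟩
  obtain ⟨hqw, hqY⟩ := Finset.mem_erase.1 hq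
  rcases lt_or_gt_of_ne hqw with h | h
  · exact hpw q hqY ⟨hpq, h⟩
  · exact hws q hqY ⟨h, hqs⟩

lemma predIn_eq_max' (h : (Y.filter (· < v)).Nonempty) :
    predIn Y v = (Y.filter (· < v)).max' h := by
  rw [predIn, ← Finset.coe_max' h]
  rfl

lemma succIn_eq_min' (h : (Y.filter (v < ·)).Nonempty) :
    succIn Y v = (Y.filter (v < ·)).min' h := by
  rw [succIn, ← Finset.coe_min' h]
  rfl

lemma predIn_spec (h : ∃ q ∈ Y, q < v) :
    predIn Y v ∈ Y ∧ predIn Y v < v ∧ NoneBetween Y (predIn Y v) v := by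
  obtain ⟨q, hqY, hqv⟩ := h
  have hne : (Y.filter (· < v)).Nonempty := ⟨q, Finset.mem_filter.2 ⟨hqY, hqv⟩⟩
  obtain ⟨hmem, hlt⟩ := Finset.mem_filter.1 ((Y.filter (· < v)).max'_mem hne)
  rw [predIn_eq_max' hne]
  refine ⟨hmem, hlt, fun r hr ⟨hmr, hrv⟩ => ?_⟩
  exact (Finset.le_max' _ r (Finset.mem_filter.2 ⟨hr, hrv⟩)).not_gt hmr

lemma succIn_spec (h : ∃ q ∈ Y, v < q) :
    succIn Y v ∈ Y ∧ v < succIn Y v ∧ NoneBetween Y v (succIn Y v) := by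
  obtain ⟨q, hqY, hvq⟩ := h
  have hne : (Y.filter (v < ·)).Nonempty := ⟨q, Finset.mem_filter.2 ⟨hqY, hvq⟩⟩
  obtain ⟨hmem, hlt⟩ := Finset.mem_filter.1 ((Y.filter (v < ·)).min'_mem hne)
  rw [succIn_eq_min' hne]
  refine ⟨hmem, hlt, fun r hr ⟨hvr, hrm⟩ => ?_⟩
  exact (Finset.min'_le _ r (Finset.mem_filter.2 ⟨hr, hvr⟩)).not_gt hrm

lemma predIn_eq_of_noneBetween (hp : p ∈ Y) (hpv : p < v) (h : NoneBetween Y p v) :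
    predIn Y v = p := by
  obtain ⟨hmem, hlt, hgap⟩ := predIn_spec ⟨p, hp, hpv⟩
  by_contra hne
  rcases lt_or_gt_of_ne hne with hlt' | hgt
  · exact hgap p hp ⟨hlt', hpv⟩
  · exact h _ hmem ⟨hgt, hlt⟩

lemma succIn_eq_of_noneBetween (hs : s ∈ Y) (hvs : v < s) (h : NoneBetween Y v s) :
    succIn Y v = s := by
  obtain ⟨hmem, hlt, hgap⟩ := succIn_spec ⟨s, hs, hvs⟩
  by_contra hne
  rcases lt_or_gt_of_ne hne with hlt' | hgt
  · exact h _ hmem ⟨hlt, hlt'⟩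
  · exact hgap s hs ⟨hvs, hgt⟩

lemma succIn_mem_or_eq_zero (Y : Finset ℕ) (v : ℕ) : succIn Y v ∈ Y ∨ succIn Y v = 0 := by
  by_cases h : ∃ q ∈ Y, v < q
  · exact Or.inl (succIn_spec h).1
  · right
    have : Y.filter (v < ·) = ∅ :=
      Finset.filter_eq_empty_iff.2 fun q hq hvq => h ⟨q, hq, hvq⟩
    simp [succIn, this]

lemma eq_of_predIn_lt_of_lt_succIn (hq : q ∈ Y) (hpq : predIn Y v < q) (hqs : q < succIn Y v) :
    q = v := by
  by_contra hne
  rcases lt_or_gt_of_ne hne with h | h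
  · exact (predIn_spec ⟨q, hq, h⟩).2.2 q hq ⟨hpq, h⟩
  · exact (succIn_spec ⟨q, hq, h⟩).2.2 q hq ⟨h, hqs⟩

end Neighbours

lemma mem_foldl_erase {u : List ℕ} {Y : Finset ℕ} {m : ℕ} :
    m ∈ u.foldl Finset.erase Y ↔ m ∈ Y ∧ m ∉ u := by
  induction u generalizing Y with
  | nil => simp
  | cons w u ih =>
    rw [List.foldl_cons, ih, Finset.mem_erase, List.mem_cons]
    tauto

/-- Unlike `phiAux`, this draws a diagonal for the last letter too. -/
def prefixDiagonals : List ℕ → Finset ℕ → Finset (ℕ × ℕ)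
  | [], _ => ∅
  | w :: u, Y => insert (predIn Y w, succIn Y w) (prefixDiagonals u (Y.erase w))

lemma phiAux_cons_of_ne_nil (w : ℕ) {l : List ℕ} (hl : l ≠ []) (Y : Finset ℕ) :
    phiAux (w :: l) Y = insert (predIn Y w, succIn Y w) (phiAux l (Y.erase w)) := by
  obtain ⟨b, t, rfl⟩ := List.exists_cons_of_ne_nil hl
  rfl

lemma phiAux_append (u : List ℕ) {rest : List ℕ} (hrest : rest ≠ []) (Y : Finset ℕ) :
    phiAux (u ++ rest) Y = prefixDiagonals u Y ∪ phiAux rest (u.foldl Finset.erase Y) := by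
  induction u generalizing Y with
  | nil => simp [prefixDiagonals]
  | cons w u ih =>
    rw [List.cons_append, phiAux_cons_of_ne_nil w (by simp [hrest]), ih, prefixDiagonals,
      List.foldl_cons, Finset.insert_union]

lemma phiAux_subset_prefixDiagonals : ∀ (l : List ℕ) (Y : Finset ℕ),
    phiAux l Y ⊆ prefixDiagonals l Y
  | [], _ => subset_refl _
  | [_], _ => Finset.empty_subset _
  | _ :: b :: l, _ => Finset.insert_subset_insert _ (phiAux_subset_prefixDiagonals (b :: l) _)

lemma snd_mem_or_eq_zero_of_mem_prefixDiagonals {l : List ℕ} {Y : Finset ℕ} {e : ℕ × ℕ}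
    (he : e ∈ prefixDiagonals l Y) : e.2 ∈ Y ∨ e.2 = 0 := by
  induction l generalizing Y with
  | nil => simp [prefixDiagonals] at he
  | cons w l ih =>
    rcases Finset.mem_insert.1 he with rfl | he
    · exact succIn_mem_or_eq_zero Y w
    · exact (ih he).imp_left Finset.mem_of_mem_erase

/-- The diagonal drawn for a letter `w` spans no vertex present at that time other than `w`. -/
lemma not_between_of_mem_prefixDiagonals {u : List ℕ} {Y : Finset ℕ} {e : ℕ × ℕ} {q : ℕ}
    (he : e ∈ prefixDiagonals u Y) (hq : q ∈ u.foldl Finset.erase Y) :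
    ¬(e.1 < q ∧ q < e.2) := by
  induction u generalizing Y with
  | nil => simp [prefixDiagonals] at he
  | cons w u ih =>
    rw [List.foldl_cons] at hq
    rcases Finset.mem_insert.1 he with rfl | he
    · obtain ⟨hqw, hqY⟩ := Finset.mem_erase.1 (mem_foldl_erase.1 hq).1
      exact fun ⟨h1, h2⟩ => hqw (eq_of_predIn_lt_of_lt_succIn hqY h1 h2)
    · exact ih he hq

lemma phiAux_swap {Y : Finset ℕ} {x z : ℕ} (v : List ℕ) (hx : x ∈ Y) (hz : z ∈ Y)
    (hxz : x < z) (h : NoneBetween Y x z) :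
    phiAux (z :: x :: v) Y =
      insert (x, succIn Y z) ((phiAux (x :: z :: v) Y).erase (predIn Y x, z)) := by
  have hbelow : (Y.erase z).filter (· < x) = (Y.erase x).filter (· < z) := by
    ext q
    have := h q
    simp only [Finset.mem_filter, Finset.mem_erase]
    constructor <;> rintro ⟨⟨hq, hqY⟩, hlt⟩ <;> simp_all <;> omega
  have habove : (Y.erase z).filter (x < ·) = (Y.erase x).filter (z < ·) := by
    ext q
    have := h q
    simp only [Finset.mem_filter, Finset.mem_erase]
    constructor <;> rintro ⟨⟨hq, hqY⟩, hlt⟩ <;> simp_all <;> omega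
  -- `x` in `Y \ {z}` and `z` in `Y \ {x}` have the same neighbours
  have hQ : phiAux (x :: v) (Y.erase z) = phiAux (z :: v) (Y.erase x) := by
    cases v with
    | nil => rfl
    | cons y v =>
      rw [phiAux_cons_of_ne_nil x (List.cons_ne_nil y v),
        phiAux_cons_of_ne_nil z (List.cons_ne_nil y v), predIn, predIn, succIn, succIn,
        hbelow, habove, Finset.erase_right_comm]
  have hnotin : (predIn Y x, z) ∉ phiAux (x :: v) (Y.erase z) := fun hmem =>
    (snd_mem_or_eq_zero_of_mem_prefixDiagonals (phiAux_subset_prefixDiagonals _ _ hmem)).elim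
      (by simp) (by omega)
  rw [phiAux_cons_of_ne_nil z (List.cons_ne_nil x v),
    phiAux_cons_of_ne_nil x (List.cons_ne_nil z v),
    predIn_eq_of_noneBetween hx hxz h, succIn_eq_of_noneBetween hz hxz h, ← hQ,
    Finset.erase_insert hnotin]

lemma phiAux_append_swap {Y : Finset ℕ} {x z : ℕ} (u v : List ℕ)
    (hx : x ∈ u.foldl Finset.erase Y) (hz : z ∈ u.foldl Finset.erase Y) (hxz : x < z)
    (h : NoneBetween (u.foldl Finset.erase Y) x z)
    (hbelow : ∃ q ∈ u.foldl Finset.erase Y, q < x) :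
    phiAux (u ++ z :: x :: v) Y =
      insert (x, succIn (u.foldl Finset.erase Y) z)
        ((phiAux (u ++ x :: z :: v) Y).erase (predIn (u.foldl Finset.erase Y) x, z)) := by
  have hnotin : (predIn (u.foldl Finset.erase Y) x, z) ∉ prefixDiagonals u Y := fun hmem =>
    not_between_of_mem_prefixDiagonals hmem hx ⟨(predIn_spec hbelow).2.1, hxz⟩
  rw [phiAux_append u (List.cons_ne_nil _ _), phiAux_append u (List.cons_ne_nil _ _),
    phiAux_swap v hx hz hxz h, Finset.erase_union_distrib, Finset.erase_eq_of_notMem hnotin,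
    Finset.union_insert]

def NeighborsJoined (Y : Finset ℕ) (D : Finset (ℕ × ℕ)) : Prop :=
  ∀ p ∈ Y, ∀ s ∈ Y, p < s → NoneBetween Y p s → s = p + 1 ∨ (p, s) ∈ D

lemma neighborsJoined_range (m : ℕ) (D : Finset (ℕ × ℕ)) :
    NeighborsJoined (Finset.range m) D := by
  intro p _ s hs hps h
  left
  by_contra hne
  exact h (p + 1) (Finset.mem_range.2 (by simp at hs; omega)) ⟨by omega, by omega⟩

lemma NeighborsJoined.erase {Y : Finset ℕ} {D : Finset (ℕ × ℕ)} {w : ℕ}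
    (hY : NeighborsJoined Y D) (hw : (predIn Y w, succIn Y w) ∈ D) :
    NeighborsJoined (Y.erase w) D := by
  intro p hp s hs hps h
  obtain ⟨hpw, hpY⟩ := Finset.mem_erase.1 hp
  obtain ⟨hsw, hsY⟩ := Finset.mem_erase.1 hs
  by_cases hgap : NoneBetween Y p s
  · exact hY p hpY s hsY hps hgap
  · obtain ⟨q, hqY, hpq, hqs⟩ : ∃ q ∈ Y, p < q ∧ q < s := by
      simpa [NoneBetween] using hgap
    have hqw : q = w := by
      by_contra hqw
      exact h q (Finset.mem_erase.2 ⟨hqw, hqY⟩) ⟨hpq, hqs⟩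
    subst hqw
    have hpred : predIn Y q = p := by
      refine predIn_eq_of_noneBetween hpY hpq fun r hr ⟨hpr, hrq⟩ => ?_
      exact h r (Finset.mem_erase.2 ⟨hrq.ne, hr⟩) ⟨hpr, hrq.trans hqs⟩
    have hsucc : succIn Y q = s := by
      refine succIn_eq_of_noneBetween hsY hqs fun r hr ⟨hqr, hrs⟩ => ?_
      exact h r (Finset.mem_erase.2 ⟨hqr.ne', hr⟩) ⟨hpq.trans hqr, hrs⟩
    exact Or.inr (hpred ▸ hsucc ▸ hw)

lemma NeighborsJoined.foldl_erase {Y : Finset ℕ} {D : Finset (ℕ × ℕ)} {u : List ℕ}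
    (hY : NeighborsJoined Y D) (hu : prefixDiagonals u Y ⊆ D) :
    NeighborsJoined (u.foldl Finset.erase Y) D := by
  induction u generalizing Y with
  | nil => exact hY
  | cons w u ih =>
    rw [prefixDiagonals, Finset.insert_subset_iff] at hu
    exact ih (hY.erase hu.1) hu.2

def remainingVertices (n : ℕ) (u : List ℕ) : Finset ℕ :=
  u.foldl Finset.erase (Finset.range (n + 2))

lemma remainingVertices_append_singleton (n : ℕ) (u : List ℕ) (x : ℕ) :
    remainingVertices n (u ++ [x]) = (remainingVertices n u).erase x := by
  simp [remainingVertices]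

section PhiT

variable {n : ℕ} {u rest : List ℕ}

lemma isEdge_phiT_of_noneBetween (hrest : rest ≠ []) {p s : ℕ}
    (hp : p ∈ remainingVertices n u) (hs : s ∈ remainingVertices n u) (hps : p < s)
    (h : NoneBetween (remainingVertices n u) p s) :
    IsEdge n (phiT n (u ++ rest)) p s := by
  have hjoined := (neighborsJoined_range (n + 2) (phiT n (u ++ rest))).foldl_erase
    (u := u) (by rw [phiT, phiAux_append u hrest]; exact Finset.subset_union_left)
  have hsn : s < n + 2 := Finset.mem_range.1 (mem_foldl_erase.1 hs).1
  exact ⟨hps, by omega, (hjoined p hp s hs hps h).imp_right Or.inr⟩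

lemma isFace_phiT_of_noneBetween (hrest : rest ≠ []) {p q s : ℕ}
    (hp : p ∈ remainingVertices n u) (hq : q ∈ remainingVertices n u)
    (hs : s ∈ remainingVertices n u) (hpq : p < q) (hqs : q < s)
    (hpq_gap : NoneBetween (remainingVertices n u) p q)
    (hqs_gap : NoneBetween (remainingVertices n u) q s) :
    IsFace n (phiT n (u ++ q :: rest)) p q s := by
  have hps : IsEdge n (phiT n (u ++ [q] ++ rest)) p s := by
    refine isEdge_phiT_of_noneBetween hrest ?_ ?_ (hpq.trans hqs) ?_ <;>
      rw [remainingVertices_append_singleton]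
    · exact Finset.mem_erase.2 ⟨hpq.ne, hp⟩
    · exact Finset.mem_erase.2 ⟨hqs.ne', hs⟩
    · exact hpq_gap.erase_of_noneBetween hqs_gap
  refine ⟨hpq, hqs, isEdge_phiT_of_noneBetween (List.cons_ne_nil _ _) hp hq hpq hpq_gap,
    isEdge_phiT_of_noneBetween (List.cons_ne_nil _ _) hq hs hqs hqs_gap, ?_⟩
  simpa using hps

lemma mem_iff_of_perm_range {σ : List ℕ} (hσ : σ.Perm ((List.range n).map (· + 1)))
    (m : ℕ) :
    m ∈ σ ↔ 1 ≤ m ∧ m ≤ n := by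
  rw [hσ.mem_iff, List.mem_map]
  constructor
  · rintro ⟨k, hk, rfl⟩
    have := List.mem_range.1 hk
    omega
  · rintro ⟨h1, h2⟩
    exact ⟨m - 1, List.mem_range.2 (by omega), by omega⟩

lemma mem_remainingVertices_iff (hσ : (u ++ rest).Perm ((List.range n).map (· + 1))) {m : ℕ} :
    m ∈ remainingVertices n u ↔ m = 0 ∨ m = n + 1 ∨ m ∈ rest := by
  have hmem := mem_iff_of_perm_range hσ
  have hdisj : u.Disjoint rest := List.disjoint_of_nodup_append
    (hσ.nodup_iff.2 (List.nodup_range.map (add_left_injective 1)))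
  rw [remainingVertices, mem_foldl_erase, Finset.mem_range]
  constructor
  · rintro ⟨hm, hmu⟩
    by_cases hend : m = 0 ∨ m = n + 1
    · exact hend.elim Or.inl (Or.inr ∘ Or.inl)
    · have := (hmem m).2 (by omega)
      exact Or.inr (Or.inr ((List.mem_append.1 this).resolve_left hmu))
  · rintro (rfl | rfl | hm)
    · exact ⟨by omega, fun h => by have := (hmem 0).1 (List.mem_append_left _ h); omega⟩
    · exact ⟨by omega, fun h => by have := (hmem (n + 1)).1 (List.mem_append_left _ h); omega⟩
    · have := (hmem m).1 (List.mem_append_right _ hm)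
      exact ⟨by omega, fun h => hdisj h hm⟩

lemma noneBetween_remainingVertices {v : List ℕ} {x z : ℕ}
    (hσ : (u ++ x :: z :: v).Perm ((List.range n).map (· + 1)))
    (hv : ∀ y ∈ v, ¬(x < y ∧ y < z)) :
    NoneBetween (remainingVertices n u) x z := by
  have hzn := (mem_iff_of_perm_range hσ z).1 (by simp)
  intro m hm ⟨hxm, hmz⟩
  rcases (mem_remainingVertices_iff hσ).1 hm with rfl | rfl | hm
  · omega
  · omega
  · rcases List.mem_cons.1 hm with rfl | hm
    · omega
    rcases List.mem_cons.1 hm with rfl | hm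
    · omega
    exact hv m hm ⟨hxm, hmz⟩

end PhiT

/-- If `σ = u x z v` and `σ' = u z x v` with `x < z` and `v` contains no letter `y`
with `x < y < z`, then `φ(σ)` and `φ(σ')` differ by exactly one diagonal flip. -/
theorem stmt7 (n : ℕ) (u v : List ℕ) (x z : ℕ) (hxz : x < z)
    (hl : (u ++ [x, z] ++ v).Perm ((List.range n).map (· + 1)))
    (hv : ∀ y ∈ v, ¬(x < y ∧ y < z)) :
    FlipAdj n (phiT n (u ++ [x, z] ++ v)) (phiT n (u ++ [z, x] ++ v)) := by
  simp only [List.append_assoc, List.cons_append, List.nil_append] at hl ⊢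
  set Y := remainingVertices n u
  have hY (m : ℕ) : m ∈ Y ↔ m = 0 ∨ m = n + 1 ∨ m ∈ x :: z :: v :=
    mem_remainingVertices_iff hl
  have hx1 := (mem_iff_of_perm_range hl x).1 (by simp)
  have hzn := (mem_iff_of_perm_range hl z).1 (by simp)
  have hx := (hY x).2 (by simp)
  have hz := (hY z).2 (by simp)
  have hxz_gap := noneBetween_remainingVertices hl hv
  have hbelow : ∃ q ∈ Y, q < x := ⟨0, (hY 0).2 (Or.inl rfl), by omega⟩
  have habove : ∃ q ∈ Y, z < q := ⟨n + 1, (hY (n + 1)).2 (Or.inr (Or.inl rfl)), by omega⟩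
  obtain ⟨haY, hax, hax_gap⟩ := predIn_spec hbelow
  obtain ⟨hdY, hzd, hzd_gap⟩ := succIn_spec habove
  set a := predIn Y x
  set d := succIn Y z
  have hface_axz := isFace_phiT_of_noneBetween (List.cons_ne_nil z v) haY hx hz hax hxz
    hax_gap hxz_gap
  have hface_azd : IsFace n (phiT n (u ++ x :: z :: v)) a z d := by
    cases v with
    | nil =>
      have ha := (hY a).1 haY
      have hd := (hY d).1 hdY
      simp only [List.mem_cons, List.not_mem_nil, or_false] at ha hd
      exact ⟨hax.trans hxz, hzd, hface_axz.2.2.2.2,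
        isEdge_phiT_of_noneBetween (List.cons_ne_nil _ _) hz hdY hzd hzd_gap,
        ⟨by omega, by omega, Or.inr (Or.inl ⟨by omega, by omega⟩)⟩⟩
    | cons y w =>
      have hR : remainingVertices n (u ++ [x]) = Y.erase x :=
        remainingVertices_append_singleton n u x
      simpa using isFace_phiT_of_noneBetween (u := u ++ [x]) (List.cons_ne_nil y w)
        (hR ▸ Finset.mem_erase.2 ⟨hax.ne, haY⟩) (hR ▸ Finset.mem_erase.2 ⟨hxz.ne', hz⟩)
        (hR ▸ Finset.mem_erase.2 ⟨(hxz.trans hzd).ne', hdY⟩) (hax.trans hxz) hzd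
        (hR ▸ hax_gap.erase_of_noneBetween hxz_gap)
        (hR ▸ hzd_gap.mono (Finset.erase_subset x Y))
  exact ⟨a, x, z, d, hax, hxz, hzd,
    Or.inr ⟨hface_axz, hface_azd, phiAux_append_swap u v hx hz hxz hxz_gap hbelow⟩⟩
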